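/- arXiv:2604.12829 — 6 statements merged into one kernel-verified Lean document; each statement's English description precedes it below -/
import Mathlib

section
/- Let ψ be twice continuously differentiable on [-τ, +∞) with τ > 0, with ψ'' decreasing on [-τ,+∞). Define c(z) = ψ''(-τ) if z = -τ, and c(z) = 2(ψ(-τ) - ψ(z) + ψ'(z)(z+τ))/(z+τ)² otherwise, and assume c(z) > 0 for all z ≥ -τ. Then for all x, z ∈ [-τ, +∞): ψ(x) ≤ ψ(z) + ψ'(z)(x - z) + (c(z)/2)(x - z)². -/
/-!
Write `g = q - ψ`, where `q` is the quadratic model at `z` with curvature `c = c(z)`. Then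
`g z = g' z = 0`, and `g'' = c - ψ''` is increasing, so `g'` is convex. If `z > -τ`, the choice
of `c(z)` is exactly `g(-τ) = 0`; Rolle gives a zero `ξ ∈ (-τ, z)` of `g'`, and convexity of `g'`
with the two zeros `ξ < z` makes `g` increase on `[-τ, ξ]`, decrease on `[ξ, z]` and increase on
`[z, ∞)`, so `g ≥ min (g (-τ)) (g z) = 0`. If `z = -τ`, then `c = ψ''(-τ) ≥ ψ''`, so `g'` is
increasing from `g'(-τ) = 0` and `g` is increasing from `g(-τ) = 0`.
-/

open Set

section MeanValue

variable {f f' : ℝ → ℝ} {a b : ℝ}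

lemma le_of_hasDerivAt_nonneg (hab : a ≤ b) (hf : ContinuousOn f (Icc a b))
    (hf' : ∀ t ∈ Ioo a b, HasDerivAt f (f' t) t) (hf'₀ : ∀ t ∈ Ioo a b, 0 ≤ f' t) :
    f a ≤ f b :=
  monotoneOn_of_hasDerivWithinAt_nonneg (convex_Icc a b) hf
    (by simpa only [interior_Icc] using fun t ht => (hf' t ht).hasDerivWithinAt)
    (by simpa only [interior_Icc] using hf'₀) (left_mem_Icc.mpr hab) (right_mem_Icc.mpr hab) hab

lemma le_of_hasDerivAt_nonpos (hab : a ≤ b) (hf : ContinuousOn f (Icc a b))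
    (hf' : ∀ t ∈ Ioo a b, HasDerivAt f (f' t) t) (hf'₀ : ∀ t ∈ Ioo a b, f' t ≤ 0) :
    f b ≤ f a :=
  neg_le_neg_iff.mp <| le_of_hasDerivAt_nonneg (f := -f) (f' := -f') hab hf.neg
    (fun t ht => (hf' t ht).neg) fun t ht => neg_nonneg.mpr (hf'₀ t ht)

theorem nonneg_of_convexOn_deriv {z : ℝ} (haz : a < z) (hf : ContinuousOn f (Ici a))
    (hf' : ∀ t ∈ Ioi a, HasDerivAt f (f' t) t) (hconv : ConvexOn ℝ (Ioi a) f')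
    (hfa : f a = 0) (hfz : f z = 0) (hf'z : f' z = 0) {x : ℝ} (hx : a ≤ x) : 0 ≤ f x := by
  obtain ⟨ξ, ⟨haξ, hξz⟩, hf'ξ⟩ := exists_hasDerivAt_eq_zero haz (hf.mono Icc_subset_Ici_self)
    (hfa.trans hfz.symm) fun t ht => hf' t ht.1
  have hcont : ∀ {u v : ℝ}, a ≤ u → ContinuousOn f (Icc u v) := fun hu =>
    hf.mono fun t ht => hu.trans ht.1
  have hderiv : ∀ {u v : ℝ}, a ≤ u → ∀ t ∈ Ioo u v, HasDerivAt f (f' t) t := fun hu t ht =>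
    hf' t (hu.trans_lt ht.1)
  have hzmem : z ∈ Ioi a := haz
  rcases le_total x ξ with hxξ | hξx
  · refine hfa ▸ le_of_hasDerivAt_nonneg hx (hcont le_rfl) (hderiv le_rfl) fun t ht => ?_
    exact hf'ξ ▸ hconv.le_left_of_right_le'' ht.1 hzmem (ht.2.le.trans hxξ) hξz
      (by rw [hf'z, hf'ξ])
  rcases le_total x z with hxz | hzx
  · refine hfz ▸ le_of_hasDerivAt_nonpos hxz (hcont hx) (hderiv hx) fun t ht => ?_
    have hseg : t ∈ segment ℝ ξ z := by
      rw [segment_eq_Icc hξz.le]; exact ⟨hξx.trans ht.1.le, ht.2.le⟩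
    simpa [hf'ξ, hf'z] using hconv.le_on_segment (haξ : ξ ∈ Ioi a) hzmem hseg
  · refine hfz ▸ le_of_hasDerivAt_nonneg hzx (hcont haz.le) (hderiv haz.le) fun t ht => ?_
    exact hf'z ▸ hconv.le_right_of_left_le'' (haξ : ξ ∈ Ioi a) (haz.trans ht.1) hξz ht.1.le
      (by rw [hf'z, hf'ξ])

end MeanValue

section QuadraticMajorant

variable {ψ : ℝ → ℝ} {a z c : ℝ}

noncomputable def quadGap (ψ : ℝ → ℝ) (z c t : ℝ) : ℝ :=
  ψ z + deriv ψ z * (t - z) + c / 2 * (t - z) ^ 2 - ψ t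

noncomputable def quadGapDeriv (ψ : ℝ → ℝ) (z c t : ℝ) : ℝ :=
  deriv ψ z + c * (t - z) - deriv ψ t

lemma hasDerivAt_quadGap {t : ℝ} (hψ : DifferentiableAt ℝ ψ t) :
    HasDerivAt (quadGap ψ z c) (quadGapDeriv ψ z c t) t := by
  unfold quadGap quadGapDeriv
  have hlin : HasDerivAt (fun u : ℝ => u - z) 1 t := (hasDerivAt_id t).sub_const z
  exact ((((hlin.const_mul (deriv ψ z)).const_add (ψ z)).add
    ((hlin.pow 2).const_mul (c / 2))).sub hψ.hasDerivAt).congr_deriv (by push_cast; ring)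

lemma hasDerivAt_quadGapDeriv {t : ℝ} (hψ : DifferentiableAt ℝ (deriv ψ) t) :
    HasDerivAt (quadGapDeriv ψ z c) (c - deriv (deriv ψ) t) t := by
  unfold quadGapDeriv
  exact ((((hasDerivAt_id t).sub_const z).const_mul c |>.const_add (deriv ψ z)).sub
    hψ.hasDerivAt).congr_deriv (by ring)

lemma quadGap_self : quadGap ψ z c z = 0 := by simp [quadGap]

lemma quadGapDeriv_self : quadGapDeriv ψ z c z = 0 := by simp [quadGapDeriv]

lemma differentiableAt_of_contDiffOn_Ici (hψ : ContDiffOn ℝ 2 ψ (Ici a)) {t : ℝ} (ht : a < t) :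
    DifferentiableAt ℝ ψ t :=
  (hψ.contDiffAt (Ici_mem_nhds ht)).differentiableAt two_ne_zero

lemma differentiableAt_deriv_of_contDiffOn_Ici (hψ : ContDiffOn ℝ 2 ψ (Ici a)) {t : ℝ}
    (ht : a < t) :
    DifferentiableAt ℝ (deriv ψ) t :=
  (((hψ.mono Ioi_subset_Ici_self).deriv_of_isOpen isOpen_Ioi (m := 1) le_rfl).contDiffAt
    (Ioi_mem_nhds ht)).differentiableAt one_ne_zero

lemma continuousOn_quadGap (hψ : ContDiffOn ℝ 2 ψ (Ici a)) :
    ContinuousOn (quadGap ψ z c) (Ici a) := by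
  have := hψ.continuousOn
  unfold quadGap
  fun_prop

lemma convexOn_quadGapDeriv (hψ : ContDiffOn ℝ 2 ψ (Ici a))
    (hdec : AntitoneOn (deriv (deriv ψ)) (Ioi a)) : ConvexOn ℝ (Ioi a) (quadGapDeriv ψ z c) := by
  have hG : ∀ t ∈ Ioi a, HasDerivAt (quadGapDeriv ψ z c) (c - deriv (deriv ψ) t) t :=
    fun t ht => hasDerivAt_quadGapDeriv (differentiableAt_deriv_of_contDiffOn_Ici hψ ht)
  refine MonotoneOn.convexOn_of_deriv (convex_Ioi a)
    (fun t ht => (hG t ht).continuousAt.continuousWithinAt) ?_ ?_ <;> rw [interior_Ioi]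
  · exact fun t ht => (hG t ht).differentiableAt.differentiableWithinAt
  · intro s hs t ht hst
    rw [(hG s hs).deriv, (hG t ht).deriv]
    linarith [hdec hs ht hst]

theorem quadGap_nonneg_of_lt (haz : a < z) (hψ : ContDiffOn ℝ 2 ψ (Ici a))
    (hdec : AntitoneOn (deriv (deriv ψ)) (Ioi a)) (hga : quadGap ψ z c a = 0) {x : ℝ}
    (hx : a ≤ x) : 0 ≤ quadGap ψ z c x :=
  nonneg_of_convexOn_deriv haz (continuousOn_quadGap hψ)
    (fun _ ht => hasDerivAt_quadGap (differentiableAt_of_contDiffOn_Ici hψ ht))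
    (convexOn_quadGapDeriv hψ hdec) hga quadGap_self quadGapDeriv_self hx

theorem quadGap_nonneg_of_eq (hψ : ContDiffOn ℝ 2 ψ (Ici a))
    (hdec : AntitoneOn (deriv (deriv ψ)) (Ici a)) (hdiff : DifferentiableAt ℝ (deriv ψ) a)
    {x : ℝ} (hx : a ≤ x) : 0 ≤ quadGap ψ a (deriv (deriv ψ) a) x := by
  set c := deriv (deriv ψ) a
  have hG' : ∀ t ∈ Ioi a, HasDerivAt (quadGapDeriv ψ a c) (c - deriv (deriv ψ) t) t :=
    fun t ht => hasDerivAt_quadGapDeriv (differentiableAt_deriv_of_contDiffOn_Ici hψ ht)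
  have hGcont : ContinuousOn (quadGapDeriv ψ a c) (Icc a x) := by
    refine fun t ht => ContinuousAt.continuousWithinAt ?_
    rcases ht.1.eq_or_lt with rfl | hat
    · have := hdiff.continuousAt
      unfold quadGapDeriv
      fun_prop
    · exact (hG' t hat).continuousAt
  have hGnonneg : ∀ t ∈ Ioo a x, 0 ≤ quadGapDeriv ψ a c t := fun t ht =>
    quadGapDeriv_self ▸ le_of_hasDerivAt_nonneg ht.1.le
      (hGcont.mono (Icc_subset_Icc_right ht.2.le)) (fun s hs => hG' s hs.1)
      fun s hs => sub_nonneg.mpr (hdec self_mem_Ici (mem_Ici.mpr hs.1.le) hs.1.le)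
  exact quadGap_self ▸ le_of_hasDerivAt_nonneg hx
    ((continuousOn_quadGap hψ).mono Icc_subset_Ici_self)
    (fun t ht => hasDerivAt_quadGap (differentiableAt_of_contDiffOn_Ici hψ ht.1)) hGnonneg

end QuadraticMajorant

theorem stmt5_general (τ : ℝ) (ψ : ℝ → ℝ)
    (hψ : ContDiffOn ℝ 2 ψ (Set.Ici (-τ)))
    (hdec : AntitoneOn (deriv (deriv ψ)) (Set.Ici (-τ)))
    (c : ℝ → ℝ)
    (hc : ∀ z ∈ Set.Ici (-τ),
      c z = if z = -τ then deriv (deriv ψ) (-τ)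
        else 2 * (ψ (-τ) - ψ z + deriv ψ z * (z + τ)) / (z + τ) ^ 2)
    (hcpos : ∀ z ∈ Set.Ici (-τ), 0 < c z)
    (x z : ℝ) (hx : x ∈ Set.Ici (-τ)) (hz : z ∈ Set.Ici (-τ)) :
    ψ x ≤ ψ z + deriv ψ z * (x - z) + c z / 2 * (x - z) ^ 2 := by
  rcases (mem_Ici.mp hz).eq_or_lt with rfl | hτz
  · have hcτ : c (-τ) = deriv (deriv ψ) (-τ) := by rw [hc _ self_mem_Ici, if_pos rfl]
    -- `deriv` is two-sided, so `deriv ψ (-τ)` is only the one-sided derivative of `ψ` once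
    -- `deriv ψ` is continuous at `-τ`; this is what `c (-τ) > 0` provides.
    have hdiff : DifferentiableAt ℝ (deriv ψ) (-τ) := by
      by_contra h
      have := hcpos (-τ) self_mem_Ici
      rw [hcτ, deriv_zero_of_not_differentiableAt h] at this
      exact this.false
    rw [hcτ, ← sub_nonneg]
    exact quadGap_nonneg_of_eq hψ hdec hdiff hx
  · have hga : quadGap ψ z (c z) (-τ) = 0 := by
      rw [quadGap, hc z hz, if_neg hτz.ne']
      field_simp [(neg_lt_iff_pos_add.mp hτz).ne']
      ring
    exact sub_nonneg.mp (quadGap_nonneg_of_lt hτz hψ (hdec.mono Ioi_subset_Ici_self) hga hx)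

/-- Quadratic majorization (Erdogan–Fessler curvature): if `ψ` is twice continuously
differentiable on `[-τ,∞)` with `ψ''` decreasing there, and the curvature `c` is positive,
then `ψ(x) ≤ ψ(z) + ψ'(z)(x-z) + (c(z)/2)(x-z)²` for all `x, z ∈ [-τ,∞)`. -/
theorem stmt5 (τ : ℝ) (hτ : 0 < τ) (ψ : ℝ → ℝ)
    (hψ : ContDiffOn ℝ 2 ψ (Set.Ici (-τ)))
    (hdec : AntitoneOn (deriv (deriv ψ)) (Set.Ici (-τ)))
    (c : ℝ → ℝ)
    (hc : ∀ z ∈ Set.Ici (-τ),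
      c z = if z = -τ then deriv (deriv ψ) (-τ)
        else 2 * (ψ (-τ) - ψ z + deriv ψ z * (z + τ)) / (z + τ) ^ 2)
    (hcpos : ∀ z ∈ Set.Ici (-τ), 0 < c z)
    (x z : ℝ) (hx : x ∈ Set.Ici (-τ)) (hz : z ∈ Set.Ici (-τ)) :
    ψ x ≤ ψ z + deriv ψ z * (x - z) + c z / 2 * (x - z) ^ 2 :=
  stmt5_general τ ψ hψ hdec c hc hcpos x z hx hz
end

section
/- Let θ = (θ_n) ∈ [0,∞)^N \ {0}, δ₁, δ₂ ≥ 0, ζ = 1/∑_n θ_n, and define ψ(x) = -ln(θᵀx + δ₁ + δ₂) on D = (-ζδ₁, +∞)^N. For z ∈ D, set h_z(x) = -∑_{n=1}^N (θ_n(z_n + ζδ₁)/(θᵀz + δ₁ + δ₂)) ln(x_n + ζδ₁). Then for all x ∈ D: ψ(x) ≤ ψ(z) + ⟨∇ψ(z), x - z⟩ + D_{h_z}(x, z). -/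
open Finset

/-- Logarithmic separable majorization via Jensen's inequality:
for `ψ(x) = -ln(θᵀx + δ₁ + δ₂)` and the separable Legendre function
`h_z(x) = -∑ₙ (θₙ(zₙ+ζδ₁)/(θᵀz+δ₁+δ₂)) ln(xₙ+ζδ₁)`, one has
`ψ(x) ≤ ψ(z) + ⟨∇ψ(z), x-z⟩ + D_{h_z}(x,z)` on `D = (-ζδ₁, ∞)^N`. -/
theorem stmt6 {N : ℕ} (θ : Fin N → ℝ) (hθ : ∀ n, 0 ≤ θ n) (hθ0 : θ ≠ 0)
    (δ₁ δ₂ : ℝ) (hδ₁ : 0 ≤ δ₁) (hδ₂ : 0 ≤ δ₂)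
    (ζ : ℝ) (hζ : ζ = (∑ n, θ n)⁻¹)
    (z x : Fin N → ℝ)
    (hz : ∀ n, -(ζ * δ₁) < z n) (hx : ∀ n, -(ζ * δ₁) < x n) :
    -Real.log (∑ n, θ n * x n + δ₁ + δ₂) ≤
      -Real.log (∑ n, θ n * z n + δ₁ + δ₂)
      + (-(∑ n, θ n * (x n - z n)) / (∑ n, θ n * z n + δ₁ + δ₂))
      + ((-(∑ n, θ n * (z n + ζ * δ₁) / (∑ n', θ n' * z n' + δ₁ + δ₂) *
            Real.log (x n + ζ * δ₁)))
        - (-(∑ n, θ n * (z n + ζ * δ₁) / (∑ n', θ n' * z n' + δ₁ + δ₂) *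
            Real.log (z n + ζ * δ₁)))
        - ∑ n, (-(θ n * (z n + ζ * δ₁) / (∑ n', θ n' * z n' + δ₁ + δ₂)) /
            (z n + ζ * δ₁)) * (x n - z n)) := by
  -- basic positivity facts
  obtain ⟨m, hm⟩ : ∃ m, 0 < θ m := by
    by_contra h
    push_neg at h
    exact hθ0 (funext fun n => le_antisymm (h n) (hθ n))
  have hT : 0 < ∑ n, θ n :=
    Finset.sum_pos' (fun n _ => hθ n) ⟨m, Finset.mem_univ m, hm⟩
  have hζ0 : 0 ≤ ζ := by rw [hζ]; exact inv_nonneg.mpr hT.le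
  set c : ℝ := ζ * δ₁ with hc
  have hc0 : 0 ≤ c := mul_nonneg hζ0 hδ₁
  have hzc : ∀ n, 0 < z n + c := fun n => by have := hz n; linarith
  have hxc : ∀ n, 0 < x n + c := fun n => by have := hx n; linarith
  have hcT : c * (∑ n, θ n) = δ₁ := by
    rw [hc, hζ]; field_simp
  set Sz : ℝ := ∑ n, θ n * z n + δ₁ + δ₂ with hSzdef
  set Sx : ℝ := ∑ n, θ n * x n + δ₁ + δ₂ with hSxdef
  have hsum_z : ∑ n, θ n * (z n + c) = Sz - δ₂ := by
    simp only [mul_add, Finset.sum_add_distrib, ← Finset.sum_mul, hSzdef]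
    nlinarith [hcT]
  have hsum_x : ∑ n, θ n * (x n + c) = Sx - δ₂ := by
    simp only [mul_add, Finset.sum_add_distrib, ← Finset.sum_mul, hSxdef]
    nlinarith [hcT]
  have hpos_z : 0 < ∑ n, θ n * (z n + c) :=
    Finset.sum_pos' (fun n _ => mul_nonneg (hθ n) (hzc n).le)
      ⟨m, Finset.mem_univ m, mul_pos hm (hzc m)⟩
  have hpos_x : 0 < ∑ n, θ n * (x n + c) :=
    Finset.sum_pos' (fun n _ => mul_nonneg (hθ n) (hxc n).le)
      ⟨m, Finset.mem_univ m, mul_pos hm (hxc m)⟩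
  have hSz : 0 < Sz := by nlinarith [hsum_z]
  have hSx : 0 < Sx := by nlinarith [hsum_x]
  clear_value c Sz Sx
  clear hζ hc hSzdef hSxdef hcT hz hx hθ0 hm hT hζ0
  -- gradient terms cancel
  have hgrad : (∑ n, (-(θ n * (z n + c) / Sz) / (z n + c)) * (x n - z n))
      = -(∑ n, θ n * (x n - z n)) / Sz := by
    have h1 : -(∑ n, θ n * (x n - z n)) / Sz
        = ∑ n, -(θ n * (x n - z n) / Sz) := by
      rw [neg_div, Finset.sum_div, ← Finset.sum_neg_distrib]
    rw [h1]
    refine Finset.sum_congr rfl fun n _ => ?_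
    have h2 := (hzc n).ne'
    have h3 := hSz.ne'
    field_simp
  rw [hgrad]
  -- reduce to the Jensen inequality
  set L : ℝ := Real.log Sx - Real.log Sz with hL
  have key : (∑ n, θ n * (z n + c) / Sz * Real.log (x n + c))
      - (∑ n, θ n * (z n + c) / Sz * Real.log (z n + c)) ≤ L := by
    have per : ∀ n, θ n * (z n + c) / Sz * Real.log (x n + c)
        - θ n * (z n + c) / Sz * Real.log (z n + c)
        ≤ θ n * (z n + c) / Sz * (L - 1) + θ n * (x n + c) / Sx := by
      intro n
      have hw : 0 ≤ θ n * (z n + c) / Sz :=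
        div_nonneg (mul_nonneg (hθ n) (hzc n).le) hSz.le
      have harg : 0 < (x n + c) / (z n + c) * (Sz / Sx) :=
        mul_pos (div_pos (hxc n) (hzc n)) (div_pos hSz hSx)
      have hlog : Real.log ((x n + c) / (z n + c) * (Sz / Sx))
          ≤ (x n + c) / (z n + c) * (Sz / Sx) - 1 :=
        Real.log_le_sub_one_of_pos harg
      have hle : Real.log (x n + c) - Real.log (z n + c)
          ≤ L + ((x n + c) / (z n + c) * (Sz / Sx) - 1) := by
        rw [Real.log_mul (div_pos (hxc n) (hzc n)).ne' (div_pos hSz hSx).ne',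
          Real.log_div (hxc n).ne' (hzc n).ne',
          Real.log_div hSz.ne' hSx.ne'] at hlog
        simp only [hL]
        linarith
      have hmul := mul_le_mul_of_nonneg_left hle hw
      have heq : θ n * (z n + c) / Sz * ((x n + c) / (z n + c) * (Sz / Sx))
          = θ n * (x n + c) / Sx := by
        have h2 := (hzc n).ne'
        have h3 := hSz.ne'
        have h4 := hSx.ne'
        field_simp
      have e : θ n * (z n + c) / Sz * (L + ((x n + c) / (z n + c) * (Sz / Sx) - 1))
          = θ n * (z n + c) / Sz * (L - 1)
            + θ n * (z n + c) / Sz * ((x n + c) / (z n + c) * (Sz / Sx)) := by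
        ring
      rw [e, heq, mul_sub] at hmul
      linarith
    calc (∑ n, θ n * (z n + c) / Sz * Real.log (x n + c))
        - (∑ n, θ n * (z n + c) / Sz * Real.log (z n + c))
        = ∑ n, (θ n * (z n + c) / Sz * Real.log (x n + c)
            - θ n * (z n + c) / Sz * Real.log (z n + c)) := by
          rw [Finset.sum_sub_distrib]
      _ ≤ ∑ n, (θ n * (z n + c) / Sz * (L - 1) + θ n * (x n + c) / Sx) :=
          Finset.sum_le_sum fun n _ => per n
      _ = (Sz - δ₂) / Sz * (L - 1) + (Sx - δ₂) / Sx := by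
          rw [Finset.sum_add_distrib, ← Finset.sum_div, hsum_x,
            ← Finset.sum_mul, ← Finset.sum_div, hsum_z]
      _ ≤ L := by
          have hlog2 : Real.log (Sz / Sx) ≤ Sz / Sx - 1 :=
            Real.log_le_sub_one_of_pos (div_pos hSz hSx)
          rw [Real.log_div hSz.ne' hSx.ne'] at hlog2
          have h1 : -L ≤ Sz / Sx - 1 := by simp only [hL]; linarith
          have h2 : 0 ≤ δ₂ / Sz := div_nonneg hδ₂ hSz.le
          have h3 : δ₂ / Sz * (-L) ≤ δ₂ / Sz * (Sz / Sx - 1) :=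
            mul_le_mul_of_nonneg_left h1 h2
          have e1 : (Sz - δ₂) / Sz = 1 - δ₂ / Sz := by
            field_simp
          have e2 : (Sx - δ₂) / Sx = 1 - δ₂ / Sx := by
            field_simp
          have e3 : δ₂ / Sz * (Sz / Sx) = δ₂ / Sx := by
            have h4 := hSz.ne'
            have h5 := hSx.ne'
            field_simp
          rw [e1, e2]
          nlinarith [h3, e3]
  linarith [key]
end

section
/- Let L ≥ 0 and let f, h be differentiable convex functions on an open convex set such that Lh - f is convex. Then for all x, y in the set: f(x) ≤ f(y) + ⟨∇f(y), x - y⟩ + L·D_h(x, y). -/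
open scoped RealInnerProductSpace

open Filter Set Topology

/-- Gradient inequality for convex functions: `g y + ⟪g', x - y⟫ ≤ g x`. -/
lemma aux_grad_ineq {N : ℕ} {s : Set (EuclideanSpace ℝ (Fin N))}
    (hs : IsOpen s) (hsconv : Convex ℝ s)
    {g : EuclideanSpace ℝ (Fin N) → ℝ} (hg : ConvexOn ℝ s g)
    {y : EuclideanSpace ℝ (Fin N)} (hy : y ∈ s)
    {g' : EuclideanSpace ℝ (Fin N)} (hg' : HasGradientAt g g' y)
    {x : EuclideanSpace ℝ (Fin N)} (hx : x ∈ s) :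
    g y + ⟪g', x - y⟫ ≤ g x := by
  set A : ℝ →ᵃ[ℝ] EuclideanSpace ℝ (Fin N) := AffineMap.lineMap y x with hA
  have hAfun : ∀ t : ℝ, A t = y + t • (x - y) := by
    intro t
    simp [hA, AffineMap.lineMap_apply]
    module
  set T : Set ℝ := A ⁻¹' s with hT
  have hφ : ConvexOn ℝ T (g ∘ A) := hg.comp_affineMap A
  have h0 : (0 : ℝ) ∈ T := by simp [hT, hAfun, hy]
  have h1 : (1 : ℝ) ∈ T := by
    have : A 1 = x := by rw [hAfun]; module
    simp [hT, this, hx]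
  -- derivative of φ at 0
  have hA0' : A 0 = y := by rw [hAfun]; simp
  have hAd : HasDerivAt (⇑A) (x - y) 0 := by
    have h1 : HasDerivAt (fun t : ℝ => y + t • (x - y)) (x - y) 0 := by
      simpa using ((hasDerivAt_id (0:ℝ)).smul_const (x - y)).const_add y
    exact h1.congr_of_eventuallyEq (Eventually.of_forall hAfun)
  have hφd : HasDerivAt (g ∘ ⇑A) ⟪g', x - y⟫ 0 := by
    have hf : HasFDerivAt g ((InnerProductSpace.toDual ℝ _) g') (A 0) := by
      rw [hA0']; exact hg'.hasFDerivAt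
    have hcomp := hf.comp_hasDerivAt (0 : ℝ) hAd
    simpa [InnerProductSpace.toDual_apply_apply] using hcomp
  -- slopes are bounded by the secant from 0 to 1
  have key : ⟪g', x - y⟫ ≤ (g ∘ A) 1 - (g ∘ A) 0 := by
    have htend : Tendsto (slope (g ∘ A) 0) (𝓝[>] (0:ℝ)) (𝓝 ⟪g', x - y⟫) :=
      (hasDerivAt_iff_tendsto_slope.mp hφd).mono_left
        (nhdsWithin_mono _ (fun t ht => ne_of_gt ht))
    refine le_of_tendsto htend ?_
    filter_upwards [self_mem_nhdsWithin, Ioo_mem_nhdsGT_of_mem (by norm_num : (0:ℝ) ∈ Ico 0 1)]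
      with t ht ht1
    have ht0 : (0:ℝ) < t := ht
    have htT : t ∈ T := by
      have hconvT : Convex ℝ T := hsconv.affine_preimage A
      have : t ∈ segment ℝ (0:ℝ) 1 := by
        rw [segment_eq_Icc (by norm_num : (0:ℝ) ≤ 1)]
        exact ⟨le_of_lt ht0, le_of_lt ht1.2⟩
      exact hconvT.segment_subset h0 h1 this
    have := hφ.secant_mono h0 htT h1 (ne_of_gt ht0) one_ne_zero (le_of_lt ht1.2)
    simpa [slope, div_eq_inv_mul] using this
  have hA0 : (g ∘ A) 0 = g y := by simp [Function.comp, hAfun]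
  have hA1 : (g ∘ A) 1 = g x := by
    have : A 1 = x := by rw [hAfun]; module
    simp [Function.comp, this]
  rw [hA0, hA1] at key
  linarith

/-- Extended descent lemma under relative smoothness: if `L ≥ 0` and `L·h - f` is convex
on an open convex set, then `f(x) ≤ f(y) + ⟨∇f(y), x-y⟩ + L·D_h(x,y)` there. -/
theorem stmt13 {N : ℕ} (L : ℝ) (hL : 0 ≤ L)
    (s : Set (EuclideanSpace ℝ (Fin N))) (hs : IsOpen s) (hsconv : Convex ℝ s)
    (f h : EuclideanSpace ℝ (Fin N) → ℝ)
    (hfd : DifferentiableOn ℝ f s) (hhd : DifferentiableOn ℝ h s)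
    (hfc : ConvexOn ℝ s f) (hhc : ConvexOn ℝ s h)
    (hrel : ConvexOn ℝ s (fun w => L * h w - f w))
    (x y : EuclideanSpace ℝ (Fin N)) (hx : x ∈ s) (hy : y ∈ s) :
    f x ≤ f y + ⟪gradient f y, x - y⟫ +
      L * (h x - h y - ⟪gradient h y, x - y⟫) := by
  have hfy : DifferentiableAt ℝ f y := hfd.differentiableAt (hs.mem_nhds hy)
  have hhy : DifferentiableAt ℝ h y := hhd.differentiableAt (hs.mem_nhds hy)
  have hgf : HasGradientAt f (gradient f y) y := hfy.hasGradientAt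
  have hgh : HasGradientAt h (gradient h y) y := hhy.hasGradientAt
  have hg : HasGradientAt (fun w => L * h w - f w)
      (L • gradient h y - gradient f y) y := by
    rw [hasGradientAt_iff_hasFDerivAt]
    have : ((InnerProductSpace.toDual ℝ _) (L • gradient h y - gradient f y) :
        EuclideanSpace ℝ (Fin N) →L[ℝ] ℝ)
        = L • (InnerProductSpace.toDual ℝ _) (gradient h y)
          - (InnerProductSpace.toDual ℝ _) (gradient f y) := by
      simp [map_sub, map_smul]
    rw [this]
    exact ((hgh.hasFDerivAt.const_smul L).sub hgf.hasFDerivAt).congr_fderiv (by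
      ext v; simp [mul_comm])
  have key := aux_grad_ineq hs hsconv hrel hy hg hx
  have hinner : ⟪L • gradient h y - gradient f y, x - y⟫
      = L * ⟪gradient h y, x - y⟫ - ⟪gradient f y, x - y⟫ := by
    rw [inner_sub_left, real_inner_smul_left]
  rw [hinner] at key
  nlinarith [key]
end

section
/- Let H ∈ ℝ_+^{M×N} with each row H_m having positive sum, y ∈ ℕ^M, b ∈ (0,∞)^M, ζ_m = 1/∑_n H_{m,n}, ρ = min_m ζ_m b_m, and ℓ(x) = -∑_{m=1}^M y_m ln(H_m x + b_m) on D = (-ρ, ∞)^N. For z ∈ D, define h_{1,z}(x) = -∑_{n=1}^N a_n(z) ln(x_n + ρ) with a_n(z) = ∑_{m=1}^M y_m H_{m,n}(z_n + ζ_m b_m)/(H_m z + b_m). Then for all x ∈ D: ℓ(x) ≤ ℓ(z) + ⟨∇ℓ(z), x - z⟩ + D_{h_{1,z}}(x, z). -/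
open Finset

lemma phi_mono_up {s t : ℝ} (hs : 1 ≤ s) (hst : s ≤ t) :
    s - 1 - Real.log s ≤ t - 1 - Real.log t := by
  have hs0 : (0:ℝ) < s := lt_of_lt_of_le one_pos hs
  have ht0 : (0:ℝ) < t := hs0.trans_le hst
  have h1 : Real.log t - Real.log s ≤ t / s - 1 := by
    rw [← Real.log_div ht0.ne' hs0.ne']
    exact Real.log_le_sub_one_of_pos (div_pos ht0 hs0)
  have h2 : t / s - 1 ≤ t - s := by
    rw [div_sub_one hs0.ne', div_le_iff₀ hs0]
    nlinarith
  linarith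

lemma phi_mono_down {s t : ℝ} (hs : 0 < s) (hst : s ≤ t) (ht : t ≤ 1) :
    t - 1 - Real.log t ≤ s - 1 - Real.log s := by
  have ht0 : (0:ℝ) < t := hs.trans_le hst
  have h1 : Real.log s - Real.log t ≤ s / t - 1 := by
    rw [← Real.log_div hs.ne' ht0.ne']
    exact Real.log_le_sub_one_of_pos (div_pos hs ht0)
  have h2 : s / t - 1 ≤ s - t := by
    rw [div_sub_one ht0.ne', div_le_iff₀ ht0]
    nlinarith
  linarith

lemma phi_key {x z ρ c : ℝ} (hx : 0 < x + ρ) (hz : 0 < z + ρ) (hc : ρ ≤ c) :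
    (x + c) / (z + c) - 1 - Real.log ((x + c) / (z + c))
      ≤ (x + ρ) / (z + ρ) - 1 - Real.log ((x + ρ) / (z + ρ)) := by
  have hzc : (0:ℝ) < z + c := by linarith
  have hxc : (0:ℝ) < x + c := by linarith
  rcases le_total z x with hzx | hxz
  · have h1 : (1:ℝ) ≤ (x + c) / (z + c) := (one_le_div hzc).2 (by linarith)
    have h2 : (x + c) / (z + c) ≤ (x + ρ) / (z + ρ) := by
      rw [div_le_div_iff₀ hzc hz]; nlinarith
    exact phi_mono_up h1 h2
  · have h0 : (0:ℝ) < (x + ρ) / (z + ρ) := div_pos hx hz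
    have h1 : (x + ρ) / (z + ρ) ≤ (x + c) / (z + c) := by
      rw [div_le_div_iff₀ hz hzc]; nlinarith
    have h2 : (x + c) / (z + c) ≤ 1 := (div_le_one hzc).2 (by linarith)
    exact phi_mono_down h0 h1 h2


lemma aux_cancel {A S C B : ℝ} (hC : C ≠ 0) (hS : S ≠ 0) :
    A * C / S * (B / C) = A * B / S := by
  field_simp

lemma row_key {N : ℕ} (Hm : Fin N → ℝ) (hH : ∀ n, 0 ≤ Hm n) (b c ρ : ℝ)
    (hc : ρ ≤ c) (hbc : ∑ n, Hm n * c = b)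
    (z x : Fin N → ℝ) (hz : ∀ n, 0 < z n + ρ) (hx : ∀ n, 0 < x n + ρ)
    (hS : 0 < ∑ n, Hm n * z n + b) (hT : 0 < ∑ n, Hm n * x n + b) :
    Real.log (∑ n, Hm n * z n + b) - Real.log (∑ n, Hm n * x n + b)
      + (∑ n, Hm n * (x n - z n)) / (∑ n, Hm n * z n + b)
    ≤ ∑ n, (Hm n * (z n + c) / (∑ n', Hm n' * z n' + b)) *
        ((x n - z n) / (z n + ρ) - (Real.log (x n + ρ) - Real.log (z n + ρ))) := by
  set S := ∑ n, Hm n * z n + b with hSdef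
  set T := ∑ n, Hm n * x n + b with hTdef
  have hzc : ∀ n, 0 < z n + c := fun n => lt_of_lt_of_le (hz n) (by linarith)
  have hxc : ∀ n, 0 < x n + c := fun n => lt_of_lt_of_le (hx n) (by linarith)
  set lam : Fin N → ℝ := fun n => Hm n * (z n + c) / S with hlamdef
  set v : Fin N → ℝ := fun n => (x n + c) / (z n + c) with hvdef
  have hlam0 : ∀ n, 0 ≤ lam n := fun n =>
    div_nonneg (mul_nonneg (hH n) (hzc n).le) hS.le
  have hv0 : ∀ n, 0 < v n := fun n => div_pos (hxc n) (hzc n)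
  have hSid : ∑ n, Hm n * (z n + c) = S := by
    rw [hSdef, ← hbc, ← Finset.sum_add_distrib]
    exact Finset.sum_congr rfl (fun n _ => by ring)
  have hTid : ∑ n, Hm n * (x n + c) = T := by
    rw [hTdef, ← hbc, ← Finset.sum_add_distrib]
    exact Finset.sum_congr rfl (fun n _ => by ring)
  have hlamsum : ∑ n, lam n = 1 := by
    rw [hlamdef, ← Finset.sum_div, hSid, div_self hS.ne']
  have hlamv : ∑ n, lam n * v n = T / S := by
    rw [← hTid, Finset.sum_div]
    refine Finset.sum_congr rfl (fun n _ => ?_)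
    show Hm n * (z n + c) / S * ((x n + c) / (z n + c)) = Hm n * (x n + c) / S
    exact aux_cancel (hzc n).ne' hS.ne'
  have hgrad : (∑ n, Hm n * (x n - z n)) / S = ∑ n, lam n * (v n - 1) := by
    rw [Finset.sum_div]
    refine Finset.sum_congr rfl (fun n _ => ?_)
    show Hm n * (x n - z n) / S = Hm n * (z n + c) / S * ((x n + c) / (z n + c) - 1)
    rw [div_sub_one (hzc n).ne', show x n + c - (z n + c) = x n - z n from by ring,
      aux_cancel (hzc n).ne' hS.ne']
  have hTS : 0 < T / S := div_pos hT hS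
  have jensen : ∑ n, lam n * Real.log (v n) ≤ Real.log (T / S) := by
    have per : ∀ n ∈ Finset.univ, lam n * Real.log (v n) ≤
        lam n * Real.log (T / S) + (lam n * v n * (S / T) - lam n) := by
      intro n _
      have hlog : Real.log (v n) - Real.log (T / S) ≤ v n / (T / S) - 1 := by
        rw [← Real.log_div (hv0 n).ne' hTS.ne']
        exact Real.log_le_sub_one_of_pos (div_pos (hv0 n) hTS)
      have hrw : v n / (T / S) = v n * (S / T) := by
        rw [div_eq_mul_one_div, one_div_div]
      rw [hrw] at hlog
      nlinarith [hlam0 n, mul_le_mul_of_nonneg_left hlog (hlam0 n)]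
    calc ∑ n, lam n * Real.log (v n)
        ≤ ∑ n, (lam n * Real.log (T / S) + (lam n * v n * (S / T) - lam n)) :=
          Finset.sum_le_sum per
      _ = Real.log (T / S) := by
          have h1 : T / S * (S / T) = 1 := by field_simp
          rw [Finset.sum_add_distrib, Finset.sum_sub_distrib, ← Finset.sum_mul,
            ← Finset.sum_mul, hlamsum, hlamv, h1]
          ring
  have stepD : ∀ n ∈ Finset.univ, lam n * (v n - 1 - Real.log (v n)) ≤
      lam n * ((x n - z n) / (z n + ρ) - (Real.log (x n + ρ) - Real.log (z n + ρ))) := by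
    intro n _
    have hstuff : (x n - z n) / (z n + ρ) - (Real.log (x n + ρ) - Real.log (z n + ρ))
        = (x n + ρ) / (z n + ρ) - 1 - Real.log ((x n + ρ) / (z n + ρ)) := by
      rw [Real.log_div (hx n).ne' (hz n).ne', div_sub_one (hz n).ne']
      ring_nf
    rw [hstuff]
    exact mul_le_mul_of_nonneg_left (phi_key (hx n) (hz n) hc) (hlam0 n)
  calc Real.log S - Real.log T + (∑ n, Hm n * (x n - z n)) / S
      = -Real.log (T / S) + ∑ n, lam n * (v n - 1) := by
        rw [Real.log_div hT.ne' hS.ne', hgrad]; ring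
    _ ≤ -(∑ n, lam n * Real.log (v n)) + ∑ n, lam n * (v n - 1) := by linarith
    _ = ∑ n, lam n * (v n - 1 - Real.log (v n)) := by
        rw [← Finset.sum_neg_distrib, ← Finset.sum_add_distrib]
        exact Finset.sum_congr rfl (fun n _ => by ring)
    _ ≤ ∑ n, lam n * ((x n - z n) / (z n + ρ) - (Real.log (x n + ρ) - Real.log (z n + ρ))) :=
        Finset.sum_le_sum stepD

/-- Log-shift Bregman tangent majorant (Maj-1) for the Poisson data term
`ℓ(x) = -∑ₘ yₘ ln(Hₘx + bₘ)` on `D = (-ρ,∞)^N`: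
`ℓ(x) ≤ ℓ(z) + ⟨∇ℓ(z), x-z⟩ + D_{h_{1,z}}(x,z)` with
`h_{1,z}(x) = -∑ₙ aₙ(z) ln(xₙ+ρ)`,
`aₙ(z) = ∑ₘ yₘ Hₘₙ (zₙ + ζₘbₘ)/(Hₘz + bₘ)`. -/
theorem stmt14 {M N : ℕ} (hM : 0 < M)
    (H : Fin M → Fin N → ℝ) (hH : ∀ m n, 0 ≤ H m n)
    (hrow : ∀ m, 0 < ∑ n, H m n)
    (y : Fin M → ℕ) (b : Fin M → ℝ) (hb : ∀ m, 0 < b m)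
    (ζ : Fin M → ℝ) (hζ : ∀ m, ζ m = (∑ n, H m n)⁻¹)
    (ρ : ℝ)
    (hρ : ρ = Finset.univ.inf' ⟨⟨0, hM⟩, Finset.mem_univ _⟩ (fun m => ζ m * b m))
    (z x : Fin N → ℝ) (hz : ∀ n, -ρ < z n) (hx : ∀ n, -ρ < x n)
    (a : Fin N → ℝ)
    (ha : ∀ n, a n = ∑ m, (y m : ℝ) * H m n * (z n + ζ m * b m) /
      (∑ n', H m n' * z n' + b m)) :
    -(∑ m, (y m : ℝ) * Real.log (∑ n, H m n * x n + b m)) ≤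
      -(∑ m, (y m : ℝ) * Real.log (∑ n, H m n * z n + b m))
      + (-(∑ m, (y m : ℝ) * (∑ n, H m n * (x n - z n)) / (∑ n, H m n * z n + b m)))
      + ((-(∑ n, a n * Real.log (x n + ρ)))
        - (-(∑ n, a n * Real.log (z n + ρ)))
        - ∑ n, (-(a n) / (z n + ρ)) * (x n - z n)) := by
  have hz' : ∀ n, 0 < z n + ρ := fun n => by linarith [hz n]
  have hx' : ∀ n, 0 < x n + ρ := fun n => by linarith [hx n]
  have hρle : ∀ m, ρ ≤ ζ m * b m := fun m => by
    rw [hρ]; exact Finset.inf'_le _ (Finset.mem_univ m)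
  have hbc : ∀ m, ∑ n, H m n * (ζ m * b m) = b m := by
    intro m
    rw [← Finset.sum_mul, hζ]
    exact mul_inv_cancel_left₀ (hrow m).ne' (b m)
  have hpos : ∀ (w : Fin N → ℝ), (∀ n, 0 < w n + ρ) → ∀ m,
      0 < ∑ n, H m n * w n + b m := by
    intro w hw m
    have hid : ∑ n, H m n * (w n + ζ m * b m) = ∑ n, H m n * w n + b m := by
      calc ∑ n, H m n * (w n + ζ m * b m)
          = ∑ n, (H m n * w n + H m n * (ζ m * b m)) :=
            Finset.sum_congr rfl (fun n _ => by ring)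
        _ = (∑ n, H m n * w n) + ∑ n, H m n * (ζ m * b m) := Finset.sum_add_distrib
        _ = ∑ n, H m n * w n + b m := by rw [hbc m]
    rw [← hid]
    obtain ⟨n0, hn0⟩ : ∃ n, 0 < H m n := by
      by_contra h
      push_neg at h
      have : ∑ n, H m n = 0 :=
        Finset.sum_eq_zero (fun n _ => le_antisymm (h n) (hH m n))
      linarith [hrow m]
    refine Finset.sum_pos' (fun n _ => mul_nonneg (hH m n) ?_) ⟨n0, Finset.mem_univ n0,
      mul_pos hn0 ?_⟩ <;>
    · have := hρle m
      first
      | linarith [hw n]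
      | linarith [hw n0]
  have hS := hpos z hz'
  have hT := hpos x hx'
  have main : ∑ m, (y m : ℝ) * (Real.log (∑ n, H m n * z n + b m)
        - Real.log (∑ n, H m n * x n + b m)
        + (∑ n, H m n * (x n - z n)) / (∑ n, H m n * z n + b m))
      ≤ ∑ n, a n *
        ((x n - z n) / (z n + ρ) - (Real.log (x n + ρ) - Real.log (z n + ρ))) := by
    have swap : ∑ n, a n *
        ((x n - z n) / (z n + ρ) - (Real.log (x n + ρ) - Real.log (z n + ρ)))
        = ∑ m, (y m : ℝ) * ∑ n, (H m n * (z n + ζ m * b m) / (∑ n', H m n' * z n' + b m)) *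
          ((x n - z n) / (z n + ρ) - (Real.log (x n + ρ) - Real.log (z n + ρ))) := by
      calc ∑ n, a n *
            ((x n - z n) / (z n + ρ) - (Real.log (x n + ρ) - Real.log (z n + ρ)))
          = ∑ n, ∑ m, ((y m : ℝ) * H m n * (z n + ζ m * b m) /
              (∑ n', H m n' * z n' + b m)) *
              ((x n - z n) / (z n + ρ) - (Real.log (x n + ρ) - Real.log (z n + ρ))) := by
            refine Finset.sum_congr rfl (fun n _ => ?_)
            rw [ha n, Finset.sum_mul]
        _ = ∑ m, ∑ n, ((y m : ℝ) * H m n * (z n + ζ m * b m) /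
              (∑ n', H m n' * z n' + b m)) *
              ((x n - z n) / (z n + ρ) - (Real.log (x n + ρ) - Real.log (z n + ρ))) :=
            Finset.sum_comm
        _ = ∑ m, (y m : ℝ) * ∑ n, (H m n * (z n + ζ m * b m) /
              (∑ n', H m n' * z n' + b m)) *
              ((x n - z n) / (z n + ρ) - (Real.log (x n + ρ) - Real.log (z n + ρ))) := by
            refine Finset.sum_congr rfl (fun m _ => ?_)
            rw [Finset.mul_sum]
            exact Finset.sum_congr rfl (fun n _ => by ring)
    rw [swap]
    refine Finset.sum_le_sum (fun m _ => ?_)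
    refine mul_le_mul_of_nonneg_left ?_ (Nat.cast_nonneg (y m))
    exact row_key (H m) (hH m) (b m) (ζ m * b m) ρ (hρle m) (hbc m) z x hz' hx'
      (hS m) (hT m)
  have hR : (-(∑ n, a n * Real.log (x n + ρ)))
      - (-(∑ n, a n * Real.log (z n + ρ)))
      - ∑ n, (-(a n) / (z n + ρ)) * (x n - z n)
      = ∑ n, a n *
        ((x n - z n) / (z n + ρ) - (Real.log (x n + ρ) - Real.log (z n + ρ))) := by
    rw [← Finset.sum_neg_distrib, ← Finset.sum_neg_distrib, ← Finset.sum_sub_distrib,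
      ← Finset.sum_sub_distrib]
    exact Finset.sum_congr rfl (fun n _ => by ring)
  have hL : ∑ m, (y m : ℝ) * (Real.log (∑ n, H m n * z n + b m)
        - Real.log (∑ n, H m n * x n + b m)
        + (∑ n, H m n * (x n - z n)) / (∑ n, H m n * z n + b m))
      = (∑ m, (y m : ℝ) * Real.log (∑ n, H m n * z n + b m))
        - (∑ m, (y m : ℝ) * Real.log (∑ n, H m n * x n + b m))
        + ∑ m, (y m : ℝ) * (∑ n, H m n * (x n - z n)) / (∑ n, H m n * z n + b m) := by
    rw [← Finset.sum_sub_distrib, ← Finset.sum_add_distrib]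
    exact Finset.sum_congr rfl (fun m _ => by ring)
  rw [hL] at main
  linarith [main, hR.ge, hR.le]
end

section
/- With the notation of the Poisson data term ℓ(x) = -∑_m y_m ln(H_m x + b_m) and z ∈ (0,∞)^N, define h_{6,z}(x) = -∑_{n=1}^N a_n(z) ln(x_n) with a_n(z) = ∑_{m=1}^M y_m H_{m,n} z_n/(H_m z + b_m). Then for all x ∈ (0,∞)^N: ℓ(x) ≤ ℓ(z) + ⟨∇ℓ(z), x - z⟩ + D_{h_{6,z}}(x, z). -/
open Finset

private lemma aux_jensen {N : ℕ} (c : Fin N → ℝ) (hc : ∀ n, 0 ≤ c n) (b : ℝ) (hb : 0 < b)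
    (z x : Fin N → ℝ) (hz : ∀ n, 0 < z n) (hx : ∀ n, 0 < x n)
    (Sz Sx : ℝ) (hSzd : Sz = ∑ n, c n * z n + b) (hSxd : Sx = ∑ n, c n * x n + b) :
    ∑ n, (c n * z n) * (Real.log (x n) - Real.log (z n)) ≤
      Sz * (Real.log Sx - Real.log Sz) := by
  have hzsum : 0 ≤ ∑ n, c n * z n := Finset.sum_nonneg fun n _ =>
    mul_nonneg (hc n) (hz n).le
  have hxsum : 0 ≤ ∑ n, c n * x n := Finset.sum_nonneg fun n _ =>
    mul_nonneg (hc n) (hx n).le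
  have hSzpos : 0 < Sz := by rw [hSzd]; linarith
  have hSxpos : 0 < Sx := by rw [hSxd]; linarith
  have key : ∀ n, (c n * z n) * (Real.log (x n) - Real.log (z n)) ≤
      (c n * x n) * (Sz / Sx) - c n * z n + (c n * z n) * (Real.log Sx - Real.log Sz) := by
    intro n
    rcases eq_or_lt_of_le (hc n) with h0 | hpos
    · simp [← h0]
    · have hv : 0 < x n * Sz / (z n * Sx) :=
        div_pos (mul_pos (hx n) hSzpos) (mul_pos (hz n) hSxpos)
      have hlog := Real.log_le_sub_one_of_pos hv
      have hveq : Real.log (x n * Sz / (z n * Sx)) =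
          Real.log (x n) + Real.log Sz - (Real.log (z n) + Real.log Sx) := by
        rw [Real.log_div (mul_pos (hx n) hSzpos).ne' (mul_pos (hz n) hSxpos).ne',
          Real.log_mul (hx n).ne' hSzpos.ne', Real.log_mul (hz n).ne' hSxpos.ne']
      rw [hveq] at hlog
      have hcz : 0 < c n * z n := mul_pos hpos (hz n)
      have h2 : (c n * z n) * (Real.log (x n) + Real.log Sz - (Real.log (z n) + Real.log Sx))
          ≤ (c n * z n) * (x n * Sz / (z n * Sx) - 1) :=
        mul_le_mul_of_nonneg_left hlog hcz.le
      have h3 : (c n * z n) * (x n * Sz / (z n * Sx)) = (c n * x n) * (Sz / Sx) := by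
        field_simp [(hz n).ne', hSxpos.ne']
      nlinarith [h2, h3]
  have keyb : (0:ℝ) ≤ b * (Sz / Sx) - b + b * (Real.log Sx - Real.log Sz) := by
    have hv : 0 < Sz / Sx := div_pos hSzpos hSxpos
    have hlog := Real.log_le_sub_one_of_pos hv
    rw [Real.log_div hSzpos.ne' hSxpos.ne'] at hlog
    nlinarith [mul_le_mul_of_nonneg_left hlog hb.le]
  have hsum := Finset.sum_le_sum (fun n (_ : n ∈ Finset.univ) => key n)
  have hrw : ∑ n, ((c n * x n) * (Sz / Sx) - c n * z n + (c n * z n) * (Real.log Sx - Real.log Sz))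
      = (∑ n, c n * x n) * (Sz / Sx) - (∑ n, c n * z n)
        + (∑ n, c n * z n) * (Real.log Sx - Real.log Sz) := by
    rw [Finset.sum_add_distrib, Finset.sum_sub_distrib, ← Finset.sum_mul, ← Finset.sum_mul]
  rw [hrw] at hsum
  have hfin : (∑ n, c n * x n) * (Sz / Sx) + b * (Sz / Sx) = Sz := by
    have h : ((∑ n, c n * x n) + b) * (Sz / Sx) = Sz := by
      rw [← hSxd]; field_simp
    linarith [h]
  have hzb : (∑ n, c n * z n) = Sz - b := by rw [hSzd]; ring
  have hL : (Sz - b) * (Real.log Sx - Real.log Sz) + b * (Real.log Sx - Real.log Sz)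
      = Sz * (Real.log Sx - Real.log Sz) := by ring
  rw [hzb] at hsum
  linarith

/-- Log-0 Bregman tangent majorant (Maj-6, the MLEM/Richardson–Lucy majorant) for the
Poisson data term `ℓ(x) = -∑ₘ yₘ ln(Hₘx + bₘ)` on `(0,∞)^N`:
`ℓ(x) ≤ ℓ(z) + ⟨∇ℓ(z), x-z⟩ + D_{h_{6,z}}(x,z)` with
`h_{6,z}(x) = -∑ₙ aₙ(z) ln xₙ`, `aₙ(z) = ∑ₘ yₘ Hₘₙ zₙ/(Hₘz + bₘ)`. -/
theorem stmt15 {M N : ℕ}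
    (H : Fin M → Fin N → ℝ) (hH : ∀ m n, 0 ≤ H m n)
    (y : Fin M → ℕ) (b : Fin M → ℝ) (hb : ∀ m, 0 < b m)
    (z x : Fin N → ℝ) (hz : ∀ n, 0 < z n) (hx : ∀ n, 0 < x n)
    (a : Fin N → ℝ)
    (ha : ∀ n, a n = ∑ m, (y m : ℝ) * H m n * z n / (∑ n', H m n' * z n' + b m)) :
    -(∑ m, (y m : ℝ) * Real.log (∑ n, H m n * x n + b m)) ≤
      -(∑ m, (y m : ℝ) * Real.log (∑ n, H m n * z n + b m))
      + (-(∑ m, (y m : ℝ) * (∑ n, H m n * (x n - z n)) / (∑ n, H m n * z n + b m)))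
      + ((-(∑ n, a n * Real.log (x n)))
        - (-(∑ n, a n * Real.log (z n)))
        - ∑ n, (-(a n) / z n) * (x n - z n)) := by
  have hSz : ∀ m, 0 < ∑ n, H m n * z n + b m := by
    intro m
    have : 0 ≤ ∑ n, H m n * z n := Finset.sum_nonneg fun n _ =>
      mul_nonneg (hH m n) (hz n).le
    linarith [hb m]
  -- cancellation of linear terms
  have hcancel : ∑ n, (-(a n) / z n) * (x n - z n)
      = -(∑ m, (y m : ℝ) * (∑ n, H m n * (x n - z n)) / (∑ n, H m n * z n + b m)) := by
    have h1 : ∀ n, (-(a n) / z n) * (x n - z n)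
        = ∑ m, -((y m : ℝ) * (H m n * (x n - z n)) / (∑ n', H m n' * z n' + b m)) := by
      intro n
      rw [ha n, ← Finset.sum_neg_distrib, Finset.sum_div, Finset.sum_mul]
      refine Finset.sum_congr rfl fun m _ => ?_
      field_simp [(hz n).ne', (hSz m).ne']
    have h1' : ∑ n, (-(a n) / z n) * (x n - z n)
        = ∑ n, ∑ m, -((y m : ℝ) * (H m n * (x n - z n)) / (∑ n', H m n' * z n' + b m)) :=
      Finset.sum_congr rfl fun n _ => h1 n
    rw [h1', Finset.sum_comm (s := (Finset.univ : Finset (Fin N))) (t := (Finset.univ : Finset (Fin M)))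
      (f := fun n m => -((y m : ℝ) * (H m n * (x n - z n)) / (∑ n', H m n' * z n' + b m)))]
    rw [← Finset.sum_neg_distrib]
    refine Finset.sum_congr rfl fun m _ => ?_
    rw [Finset.sum_neg_distrib, neg_inj, Finset.mul_sum, Finset.sum_div]
  -- Jensen step
  have hjensen : ∑ n, a n * (Real.log (x n) - Real.log (z n))
      ≤ ∑ m, (y m : ℝ) * (Real.log (∑ n, H m n * x n + b m)
          - Real.log (∑ n, H m n * z n + b m)) := by
    have h1 : ∀ n, a n * (Real.log (x n) - Real.log (z n))
        = ∑ m, ((y m : ℝ) / (∑ n', H m n' * z n' + b m)) *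
            ((H m n * z n) * (Real.log (x n) - Real.log (z n))) := by
      intro n
      rw [ha n, Finset.sum_mul]
      exact Finset.sum_congr rfl fun m _ => by ring
    have h1' : ∑ n, a n * (Real.log (x n) - Real.log (z n))
        = ∑ n, ∑ m, ((y m : ℝ) / (∑ n', H m n' * z n' + b m)) *
            ((H m n * z n) * (Real.log (x n) - Real.log (z n))) :=
      Finset.sum_congr rfl fun n _ => h1 n
    rw [h1', Finset.sum_comm (s := (Finset.univ : Finset (Fin N))) (t := (Finset.univ : Finset (Fin M)))
      (f := fun n m => ((y m : ℝ) / (∑ n', H m n' * z n' + b m)) *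
        ((H m n * z n) * (Real.log (x n) - Real.log (z n))))]
    refine Finset.sum_le_sum fun m _ => ?_
    rw [← Finset.mul_sum]
    have haux := aux_jensen (H m) (hH m) (b m) (hb m) z x hz hx _ _ rfl rfl
    have hym : (0:ℝ) ≤ (y m : ℝ) / (∑ n', H m n' * z n' + b m) :=
      div_nonneg (Nat.cast_nonneg _) (hSz m).le
    calc ((y m : ℝ) / (∑ n', H m n' * z n' + b m)) *
          ∑ n, (H m n * z n) * (Real.log (x n) - Real.log (z n))
        ≤ ((y m : ℝ) / (∑ n', H m n' * z n' + b m)) *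
          ((∑ n, H m n * z n + b m) * (Real.log (∑ n, H m n * x n + b m)
            - Real.log (∑ n, H m n * z n + b m))) :=
          mul_le_mul_of_nonneg_left haux hym
      _ = (y m : ℝ) * (Real.log (∑ n, H m n * x n + b m)
            - Real.log (∑ n, H m n * z n + b m)) := by
          field_simp [(hSz m).ne']
  rw [hcancel]
  have e1 : ∑ n, a n * (Real.log (x n) - Real.log (z n))
      = (∑ n, a n * Real.log (x n)) - (∑ n, a n * Real.log (z n)) := by
    rw [← Finset.sum_sub_distrib]
    exact Finset.sum_congr rfl fun n _ => by ring
  have e2 : ∑ m, (y m : ℝ) * (Real.log (∑ n, H m n * x n + b m)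
          - Real.log (∑ n, H m n * z n + b m))
      = (∑ m, (y m : ℝ) * Real.log (∑ n, H m n * x n + b m))
        - (∑ m, (y m : ℝ) * Real.log (∑ n, H m n * z n + b m)) := by
    rw [← Finset.sum_sub_distrib]
    exact Finset.sum_congr rfl fun m _ => by ring
  rw [e1, e2] at hjensen
  linarith
end

section
/- Let z ∈ (-ρ,∞)^N with the Poisson-data notation (H ∈ ℝ_+^{M×N}, y ∈ ℕ^M, b ∈ (0,∞)^M, ζ_m = 1/∑_n H_{m,n}, ρ = min_m ζ_m b_m), and define a_{1,n}(z) = ∑_m y_m H_{m,n}(z_n + ζ_m b_m)/(H_m z + b_m) and a_{2,n} = ∑_m y_m 𝟙_{H_{m,n} ≠ 0}. Then a_{1,n}(z) ≤ a_{2,n} for every n, and consequently the Bregman divergence of h_{1,z}(x) = -∑_n a_{1,n}(z) ln(x_n + ρ) is dominated by that of h_{2,z}(x) = -∑_n a_{2,n} ln(x_n + ρ): D_{h_{1,z}}(x,z) ≤ D_{h_{2,z}}(x,z) for all x ∈ (-ρ,∞)^N. -/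
open Finset

/-- Comparison of the Log-shift majorant coefficients: `a₁ₙ(z) ≤ a₂ₙ` for all `n`, and
consequently the Bregman divergence of `h_{1,z}(x) = -∑ₙ a₁ₙ(z) ln(xₙ+ρ)` is dominated by
that of `h_{2,z}(x) = -∑ₙ a₂ₙ ln(xₙ+ρ)` on `(-ρ,∞)^N`. -/
theorem stmt19 {M N : ℕ} (hM : 0 < M)
    (H : Fin M → Fin N → ℝ) (hH : ∀ m n, 0 ≤ H m n)
    (hrow : ∀ m, 0 < ∑ n, H m n)
    (y : Fin M → ℕ) (b : Fin M → ℝ) (hb : ∀ m, 0 < b m)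
    (ζ : Fin M → ℝ) (hζ : ∀ m, ζ m = (∑ n, H m n)⁻¹)
    (ρ : ℝ)
    (hρ : ρ = Finset.univ.inf' ⟨⟨0, hM⟩, Finset.mem_univ _⟩ (fun m => ζ m * b m))
    (z : Fin N → ℝ) (hz : ∀ n, -ρ < z n)
    (a₁ a₂ : Fin N → ℝ)
    (ha₁ : ∀ n, a₁ n = ∑ m, (y m : ℝ) * H m n * (z n + ζ m * b m) /
      (∑ n', H m n' * z n' + b m))
    (ha₂ : ∀ n, a₂ n = ∑ m, (y m : ℝ) * (if H m n ≠ 0 then 1 else 0)) :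
    (∀ n, a₁ n ≤ a₂ n) ∧
      ∀ x : Fin N → ℝ, (∀ n, -ρ < x n) →
        (-(∑ n, a₁ n * Real.log (x n + ρ)))
          - (-(∑ n, a₁ n * Real.log (z n + ρ)))
          - (∑ n, (-(a₁ n) / (z n + ρ)) * (x n - z n)) ≤
        (-(∑ n, a₂ n * Real.log (x n + ρ)))
          - (-(∑ n, a₂ n * Real.log (z n + ρ)))
          - (∑ n, (-(a₂ n) / (z n + ρ)) * (x n - z n)) := by

  have hρ' : ∀ m, ρ ≤ ζ m * b m := fun m => hρ ▸ Finset.inf'_le _ (Finset.mem_univ m)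
  have hζpos : ∀ m, 0 < ζ m := fun m => by rw [hζ]; exact inv_pos.mpr (hrow m)
  have hzb : ∀ m n, 0 < z n + ζ m * b m := fun m n => by
    have h1 := hz n; have h2 := hρ' m; linarith
  have hD : ∀ m, ∑ n', H m n' * z n' + b m = ∑ n', H m n' * (z n' + ζ m * b m) := by
    intro m
    have h2 : ∑ n', H m n' * (z n' + ζ m * b m)
        = (∑ n', H m n' * z n') + (∑ n', H m n') * (ζ m * b m) := by
      rw [Finset.sum_mul, ← Finset.sum_add_distrib]
      exact Finset.sum_congr rfl fun n' _ => by ring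
    have h3 : (∑ n', H m n') * (ζ m * b m) = b m := by
      rw [hζ, ← mul_assoc, mul_inv_cancel₀ (hrow m).ne', one_mul]
    rw [h2, h3]
  have hDpos : ∀ m, 0 < ∑ n', H m n' * z n' + b m := by
    intro m
    rw [hD m]
    obtain ⟨n0, hn0⟩ : ∃ n0, 0 < H m n0 := by
      by_contra h; push_neg at h
      have : ∑ n, H m n ≤ 0 := Finset.sum_nonpos fun n _ => h n
      linarith [hrow m]
    exact Finset.sum_pos' (fun n _ => mul_nonneg (hH m n) (hzb m n).le)
      ⟨n0, Finset.mem_univ _, mul_pos hn0 (hzb m n0)⟩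
  have h1 : ∀ n, a₁ n ≤ a₂ n := by
    intro n; rw [ha₁, ha₂]
    apply Finset.sum_le_sum; intro m _
    by_cases hmn : H m n = 0
    · simp [hmn]
    · rw [if_pos hmn, mul_one, div_le_iff₀ (hDpos m), hD m]
      have hle : H m n * (z n + ζ m * b m) ≤ ∑ n', H m n' * (z n' + ζ m * b m) :=
        Finset.single_le_sum (fun i _ => mul_nonneg (hH m i) (hzb m i).le) (Finset.mem_univ n)
      calc (y m : ℝ) * H m n * (z n + ζ m * b m)
          = (y m : ℝ) * (H m n * (z n + ζ m * b m)) := by ring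
        _ ≤ (y m : ℝ) * ∑ n', H m n' * (z n' + ζ m * b m) :=
            mul_le_mul_of_nonneg_left hle (Nat.cast_nonneg _)
  refine ⟨h1, fun x hx => ?_⟩
  have hzρ : ∀ n, 0 < z n + ρ := fun n => by linarith [hz n]
  have hxρ : ∀ n, 0 < x n + ρ := fun n => by linarith [hx n]
  have hc : ∀ n, 0 ≤ Real.log (z n + ρ) - Real.log (x n + ρ) + (x n - z n) / (z n + ρ) := by
    intro n
    have h := Real.log_le_sub_one_of_pos (div_pos (hxρ n) (hzρ n))
    rw [Real.log_div (hxρ n).ne' (hzρ n).ne'] at h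
    have heq : (x n + ρ) / (z n + ρ) - 1 = (x n - z n) / (z n + ρ) := by
      rw [div_sub_one (hzρ n).ne']; ring_nf
    rw [heq] at h
    linarith
  have key : ∀ a : Fin N → ℝ,
      (-(∑ n, a n * Real.log (x n + ρ))) - (-(∑ n, a n * Real.log (z n + ρ)))
        - (∑ n, (-(a n) / (z n + ρ)) * (x n - z n))
      = ∑ n, a n * (Real.log (z n + ρ) - Real.log (x n + ρ) + (x n - z n) / (z n + ρ)) := by
    intro a
    have : (∑ n, a n * (Real.log (z n + ρ) - Real.log (x n + ρ) + (x n - z n) / (z n + ρ)))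
        = ∑ n, (a n * Real.log (z n + ρ) - a n * Real.log (x n + ρ)
            - (-(a n) / (z n + ρ)) * (x n - z n)) :=
      Finset.sum_congr rfl fun n _ => by ring
    rw [this, Finset.sum_sub_distrib, Finset.sum_sub_distrib]
    ring
  rw [key a₁, key a₂]
  exact Finset.sum_le_sum fun n _ => mul_le_mul_of_nonneg_right (h1 n) (hc n)
end
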